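/- arXiv:2407.06922 — 6 statements merged into one kernel-verified Lean document; each statement's English description precedes it below -/
import Mathlib

section
/- Let S ⊆ R be a multiplicatively closed set. Then the conductor of an ideal localizes: S⁻¹C(I) = C(S⁻¹I), where S⁻¹I is the extension of I to the localization S⁻¹R. -/
noncomputable section

universe u v

/-- The `R`-algebra map `φ : T = R[y_i : i ∈ ι] → R[t]` sending `y_i ↦ f i · t`. -/
def reesHom {R : Type u} [CommRing R] {ι : Type v} (f : ι → R) :
    MvPolynomial ι R →ₐ[R] Polynomial R :=
  MvPolynomial.aeval fun i => Polynomial.C (f i) * Polynomial.X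

/-- `J`, the defining ideal of the Rees algebra of the ideal generated by `f`. -/
def reesJ {R : Type u} [CommRing R] {ι : Type v} (f : ι → R) :
    Ideal (MvPolynomial ι R) :=
  RingHom.ker (reesHom f)

/-- `L`, the ideal of `T` generated by the linear relations `∑ aᵢ yᵢ` with `∑ aᵢ fᵢ = 0`. -/
def linRel {R : Type u} [CommRing R] {ι : Type v} (f : ι → R) :
    Ideal (MvPolynomial ι R) :=
  Ideal.span {p | ∃ a : ι →₀ R, (a.sum fun i r => r * f i) = 0 ∧
    p = a.sum fun i r => MvPolynomial.C r * MvPolynomial.X i}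

/-- The conductor `C(I) = L :_R J = {r ∈ R : r J ⊆ L}`. -/
def conductorIdeal {R : Type u} [CommRing R] {ι : Type v} (f : ι → R) : Ideal R :=
  Submodule.colon (Submodule.restrictScalars R (linRel f))
    (Submodule.restrictScalars R (reesJ f))

/-- The ideal generated by `f` is of linear type if `J = L`. -/
def IsLinearType {R : Type u} [CommRing R] {ι : Type v} (f : ι → R) : Prop :=
  reesJ f = linRel f

end

/-!
Both ingredients of the conductor commute with localization: `J` is the kernel of the ring map
`T → R[t]`, and kernels localize; a linear relation over `S⁻¹R` becomes one over `R` after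
clearing denominators, so `S⁻¹L = L(S⁻¹I)`. Since `L` is an ideal of `T`, the colon `L :_R J`
only depends on a set of ideal generators of `J`, which can be taken finite by Hilbert's basis
theorem. So `L :_R J` is a finite intersection of colons `L :_R g`, each of which localizes
directly, and finite intersections of ideals commute with localization.
-/

namespace Submodule

variable {R A : Type*} [CommSemiring R] [CommSemiring A] [Algebra R A]

theorem colon_restrictScalars_span (N : Ideal A) (X : Set A) :
    (N.restrictScalars R).colon (Ideal.span X : Set A) = (N.restrictScalars R).colon X := by
  refine (colon_mono le_rfl Ideal.subset_span).antisymm fun r hr ↦ mem_colon.mpr fun p hp ↦ ?_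
  induction hp using Submodule.span_induction with
  | mem x hx => exact mem_colon.mp hr x hx
  | zero => simp
  | add x y _ _ hx hy => rw [smul_add]; exact add_mem hx hy
  | smul a x _ hx => rw [smul_comm]; exact N.smul_mem a hx

theorem colon_image_finset {ι M : Type*} [AddCommMonoid M] [Module R M] (N : Submodule R M)
    (G : Finset ι) (v : ι → M) : N.colon (v '' G) = G.inf fun i => N.colon {v i} := by
  ext r
  simp [mem_colon, mem_finsetInf]

end Submodule

namespace IsLocalization

theorem algebraMap_mem_map_iff_exists_smul_mem {R A : Type*} [CommSemiring R] [CommSemiring A]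
    [Algebra R A] (S : Submonoid R) (Aₛ : Type*) [CommSemiring Aₛ] [Algebra A Aₛ]
    [IsLocalization (Algebra.algebraMapSubmonoid A S) Aₛ] (L : Ideal A) (a : A) :
    algebraMap A Aₛ a ∈ L.map (algebraMap A Aₛ) ↔ ∃ u ∈ S, u • a ∈ L := by
  rw [algebraMap_mem_map_algebraMap_iff (Algebra.algebraMapSubmonoid A S)]
  simp [Algebra.algebraMapSubmonoid, Algebra.smul_def]

theorem mk'_smul_mem_iff {R : Type*} [CommSemiring R] {S : Submonoid R} (Rₛ : Type*)
    [CommSemiring Rₛ] [Algebra R Rₛ] [IsLocalization S Rₛ] {M : Type*} [AddCommMonoid M]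
    [Module R M] [Module Rₛ M] [IsScalarTower R Rₛ M] (N : Submodule Rₛ M) (r : R) (s : S)
    (x : M) : mk' Rₛ r s • x ∈ N ↔ r • x ∈ N := by
  rw [← N.smul_mem_iff_of_isUnit (map_units Rₛ s), smul_smul, mk'_spec', algebraMap_smul]

theorem map_colon_singleton {R : Type*} [CommSemiring R] (S : Submonoid R) (Rₛ : Type*)
    [CommSemiring Rₛ] [Algebra R Rₛ] [IsLocalization S Rₛ] {A : Type*} [CommSemiring A]
    [Algebra R A] (Aₛ : Type*) [CommSemiring Aₛ] [Algebra A Aₛ] [Algebra R Aₛ] [Algebra Rₛ Aₛ]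
    [IsScalarTower R A Aₛ] [IsScalarTower R Rₛ Aₛ]
    [IsLocalization (Algebra.algebraMapSubmonoid A S) Aₛ] (L : Ideal A) (a : A) :
    ((L.restrictScalars R).colon {a}).map (algebraMap R Rₛ) =
      ((L.map (algebraMap A Aₛ)).restrictScalars Rₛ).colon {algebraMap A Aₛ a} := by
  ext x
  obtain ⟨r, s, rfl⟩ := exists_mk'_eq S x
  rw [mk'_mem_map_algebraMap_iff, Submodule.mem_colon_singleton, mk'_smul_mem_iff,
    Submodule.restrictScalars_mem, ← algebraMap.smul, algebraMap_mem_map_iff_exists_smul_mem S]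
  simp only [Submodule.mem_colon_singleton, Submodule.restrictScalars_mem, mul_smul]

theorem map_colon_of_fg {R : Type*} [CommSemiring R] (S : Submonoid R) (Rₛ : Type*)
    [CommSemiring Rₛ] [Algebra R Rₛ] [IsLocalization S Rₛ] {A : Type*} [CommSemiring A]
    [Algebra R A] (Aₛ : Type*) [CommSemiring Aₛ] [Algebra A Aₛ] [Algebra R Aₛ] [Algebra Rₛ Aₛ]
    [IsScalarTower R A Aₛ] [IsScalarTower R Rₛ Aₛ]
    [IsLocalization (Algebra.algebraMapSubmonoid A S) Aₛ] (L : Ideal A) {J : Ideal A}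
    (hJ : J.FG) :
    ((L.restrictScalars R).colon (J.restrictScalars R)).map (algebraMap R Rₛ) =
      ((L.map (algebraMap A Aₛ)).restrictScalars Rₛ).colon
        ((J.map (algebraMap A Aₛ)).restrictScalars Rₛ) := by
  obtain ⟨G, rfl⟩ := hJ
  rw [Submodule.coe_restrictScalars, Submodule.coe_restrictScalars, Ideal.map_span,
    Submodule.colon_restrictScalars_span, Submodule.colon_restrictScalars_span,
    ← Set.image_id (G : Set A), Set.image_image, Submodule.colon_image_finset,
    Submodule.colon_image_finset]
  simp only [id, ← map_colon_singleton S Rₛ Aₛ]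
  exact map_finset_inf (mapFrameHom S Rₛ) G _

end IsLocalization

attribute [local instance] MvPolynomial.algebraMvPolynomial Polynomial.algebra

open MvPolynomial

theorem reesHom_map {R R' : Type*} [CommRing R] [CommRing R'] (g : R →+* R') {ι : Type*}
    (f : ι → R) (q : MvPolynomial ι R) :
    reesHom (fun i => g (f i)) (q.map g) = (reesHom f q).map g := by
  induction q using MvPolynomial.induction_on with
  | C r => simp [reesHom]
  | add p q hp hq => simp [hp, hq]
  | mul_X p i hp => simp only [reesHom] at hp; simp [reesHom, hp]

theorem reesJ_localization {R : Type*} [CommRing R] (S : Submonoid R) (Rₛ : Type*)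
    [CommRing Rₛ] [Algebra R Rₛ] [IsLocalization S Rₛ] {ι : Type*} (f : ι → R) :
    reesJ (fun i => algebraMap R Rₛ (f i)) =
      (reesJ f).map (MvPolynomial.map (algebraMap R Rₛ)) := by
  have := Polynomial.isLocalization S Rₛ
  have hS : (S.map (C : R →+* MvPolynomial ι R)).map (reesHom f : MvPolynomial ι R →+* _) =
      S.map Polynomial.C := by
    ext p; simp [Submonoid.mem_map, reesHom]
  have hle :
      S.map C ≤ (S.map Polynomial.C).comap (reesHom f : MvPolynomial ι R →+* Polynomial R) :=
    hS ▸ Submonoid.le_comap_map _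
  have hφ : IsLocalization.map (Polynomial Rₛ) _ hle =
      (reesHom (fun i => algebraMap R Rₛ (f i)) : MvPolynomial ι Rₛ →+* Polynomial Rₛ) :=
    IsLocalization.map_unique _ _ fun q ↦ by exact reesHom_map (algebraMap R Rₛ) f q
  have hker := IsLocalization.ker_map (S := MvPolynomial ι Rₛ) (Polynomial Rₛ)
    (reesHom f : MvPolynomial ι R →+* Polynomial R) hS
  rwa [hφ] at hker

theorem linRel_map_le {R R' : Type*} [CommRing R] [CommRing R'] (g : R →+* R') {ι : Type*}
    (f : ι → R) : (linRel f).map (MvPolynomial.map g) ≤ linRel (fun i => g (f i)) := by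
  rw [Ideal.map_le_iff_le_comap, linRel, Ideal.span_le]
  rintro _ ⟨a, ha, rfl⟩
  refine Ideal.subset_span ⟨a.mapRange g (map_zero g), ?_, ?_⟩
  · rw [Finsupp.sum_mapRange_index (by simp)]
    simpa [map_finsuppSum] using congrArg g ha
  · simp [map_finsuppSum, Finsupp.sum_mapRange_index]

theorem linRel_localization_le {R : Type*} [CommRing R] (S : Submonoid R) (Rₛ : Type*)
    [CommRing Rₛ] [Algebra R Rₛ] [IsLocalization S Rₛ] {ι : Type*} [Fintype ι] (f : ι → R) :
    linRel (fun i => algebraMap R Rₛ (f i)) ≤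
      (linRel f).map (MvPolynomial.map (algebraMap R Rₛ)) := by
  rw [linRel, Ideal.span_le]
  rintro _ ⟨a, ha, rfl⟩
  obtain ⟨b, hb⟩ := IsLocalization.exist_integer_multiples_of_finite S a
  choose c hc using hb
  have hrel : algebraMap R Rₛ (∑ i, c i * f i) = 0 := by
    rw [Finsupp.sum_fintype _ _ (by simp)] at ha
    simp only [map_sum, map_mul, hc, Algebra.smul_def, mul_assoc, ← Finset.mul_sum, ha, mul_zero]
  obtain ⟨u, hu⟩ := (IsLocalization.map_eq_zero_iff S Rₛ _).mp hrel
  have hmem : ∑ i, C ((u : R) * c i) * X i ∈ linRel f := by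
    refine Ideal.subset_span ⟨Finsupp.equivFunOnFinite.symm fun i => (u : R) * c i, ?_, ?_⟩
    · simp [Finsupp.sum_fintype, mul_assoc, ← Finset.mul_sum, hu]
    · simp [Finsupp.sum_fintype]
  have himage : MvPolynomial.map (algebraMap R Rₛ) (∑ i, C ((u : R) * c i) * X i) =
      C (algebraMap R Rₛ ((u * b : S) : R)) * a.sum fun i r => C r * X i := by
    simp [Finsupp.sum_fintype, Finset.mul_sum, hc, Algebra.smul_def, mul_assoc]
  have hunit := (IsLocalization.map_units Rₛ (u * b)).map (C : Rₛ →+* MvPolynomial ι Rₛ)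
  rw [SetLike.mem_coe, ← Ideal.unit_mul_mem_iff_mem _ hunit, ← himage]
  exact Ideal.mem_map_of_mem _ hmem

theorem linRel_localization {R : Type*} [CommRing R] (S : Submonoid R) (Rₛ : Type*)
    [CommRing Rₛ] [Algebra R Rₛ] [IsLocalization S Rₛ] {ι : Type*} [Fintype ι] (f : ι → R) :
    linRel (fun i => algebraMap R Rₛ (f i)) =
      (linRel f).map (MvPolynomial.map (algebraMap R Rₛ)) :=
  (linRel_localization_le S Rₛ f).antisymm (linRel_map_le _ f)

theorem stmt_0_general {R : Type} [CommRing R] [IsNoetherianRing R] {m : ℕ}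
    (f : Fin m → R)
    (S : Submonoid R) (Rₛ : Type) [CommRing Rₛ] [Algebra R Rₛ] [IsLocalization S Rₛ] :
    Ideal.map (algebraMap R Rₛ) (conductorIdeal f) =
      conductorIdeal (fun j => algebraMap R Rₛ (f j)) := by
  have : IsLocalization (Algebra.algebraMapSubmonoid (MvPolynomial (Fin m) R) S)
      (MvPolynomial (Fin m) Rₛ) := MvPolynomial.isLocalization S Rₛ
  rw [conductorIdeal, conductorIdeal, reesJ_localization S Rₛ, linRel_localization S Rₛ]
  exact IsLocalization.map_colon_of_fg S Rₛ _ (linRel f) (IsNoetherian.noetherian (reesJ f))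

/-- The conductor of an ideal localizes: for a multiplicatively
closed set `S ⊆ R`, `S⁻¹C(I) = C(S⁻¹I)`. -/
theorem stmt_0 {R : Type} [CommRing R] [IsNoetherianRing R] {m : ℕ}
    (f : Fin m → R) (I : Ideal R) (hI : I = Ideal.span (Set.range f))
    (S : Submonoid R) (Rₛ : Type) [CommRing Rₛ] [Algebra R Rₛ] [IsLocalization S Rₛ] :
    Ideal.map (algebraMap R Rₛ) (conductorIdeal f) =
      conductorIdeal (fun j => algebraMap R Rₛ (f j)) :=
  stmt_0_general f S Rₛ
end

section
/- Let R be a domain and I ⊂ R a non-zero ideal. Then (a) C(I) ≠ 0, and (b) for every non-zero element r ∈ C(I), the colon ideal L :_T r equals J. -/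
/-!
Fix `i` with `a := f i ≠ 0`. The substitutions `y_j ↦ a y_j` and `y_j ↦ f_j y_i` agree modulo `L`,
because `a y_j - f_j y_i ∈ L`. The second one is `φ` followed by `t ↦ y_i`, so it kills `J`, while
the first one multiplies a form of degree `d` by `a ^ d`. Since `J` is graded, `a ^ D p ∈ L` for
every `p ∈ J` of degree at most `D`; as `J` is finitely generated, some power of `a` lies in `C(I)`.
For (b), `J ⊆ L :_T r` is the definition of `C(I)`, and `L :_T r ⊆ J` because `J ⊇ L` is prime and
does not contain `r`.
-/

open MvPolynomial

theorem MvPolynomial.IsHomogeneous.aeval_mul_const {σ R S : Type*} [CommSemiring R]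
    [CommSemiring S] [Algebra R S] {p : MvPolynomial σ R} {d : ℕ} (hp : p.IsHomogeneous d)
    (g : σ → S) (s : S) :
    MvPolynomial.aeval (fun i => g i * s) p = MvPolynomial.aeval g p * s ^ d := by
  conv_lhs => rw [p.as_sum]
  conv_rhs => rw [p.as_sum]
  rw [map_sum, map_sum, Finset.sum_mul]
  refine Finset.sum_congr rfl fun v hv => ?_
  have hdeg : v.degree = d := by
    rw [Finsupp.degree_eq_weight_one]
    exact hp (mem_support_iff.mp hv)
  simp only [aeval_monomial, mul_pow, Finsupp.prod_mul, mul_assoc]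
  rw [← hdeg, Finsupp.degree_apply, ← Finset.prod_pow_eq_pow_sum]
  rfl

theorem MvPolynomial.aeval_algebraMap_apply_eq_algebraMap_eval {σ R S : Type*} [CommSemiring R]
    [CommSemiring S] [Algebra R S] (x : σ → R) (p : MvPolynomial σ R) :
    aeval (fun i => algebraMap R S (x i)) p = algebraMap R S (eval x p) := by
  rw [eval₂_comp, aeval_def]
  rfl

theorem MvPolynomial.aeval_sub_aeval_mem {σ R S : Type*} [CommRing R] [CommRing S] [Algebra R S]
    {I : Ideal S} {g g' : σ → S} (h : ∀ i, g i - g' i ∈ I) (p : MvPolynomial σ R) :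
    aeval g p - aeval g' p ∈ I := by
  rw [← Ideal.Quotient.eq, ← Ideal.Quotient.mkₐ_eq_mk R, comp_aeval_apply, comp_aeval_apply]
  congr 2 with i
  exact Ideal.Quotient.eq.mpr (h i)

section Rees

variable {R : Type*} [CommRing R] {ι : Type*} (f : ι → R)

theorem C_mul_X_sub_C_mul_X_mem_linRel (i j : ι) :
    (C (f i) * X j - C (f j) * X i : MvPolynomial ι R) ∈ linRel f := by
  refine Ideal.subset_span ⟨Finsupp.single j (f i) - Finsupp.single i (f j), ?_, ?_⟩
  · rw [Finsupp.sum_sub_index (fun _ _ _ => sub_mul _ _ _), Finsupp.sum_single_index (zero_mul _),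
      Finsupp.sum_single_index (zero_mul _), mul_comm, sub_self]
  · rw [Finsupp.sum_sub_index (fun _ _ _ => by rw [map_sub, sub_mul]),
      Finsupp.sum_single_index (by simp), Finsupp.sum_single_index (by simp)]

theorem linRel_le_reesJ : linRel f ≤ reesJ f := by
  rw [linRel, Ideal.span_le]
  rintro _ ⟨a, ha, rfl⟩
  have : reesHom f (a.sum fun i r => C r * X i) =
      Polynomial.C (a.sum fun i r => r * f i) * Polynomial.X := by
    simp [reesHom, map_finsuppSum, Finsupp.sum_mul, Polynomial.algebraMap_eq, mul_assoc]
  simp [reesJ, this, ha]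

theorem reesHom_of_isHomogeneous {p : MvPolynomial ι R} {d : ℕ} (hp : p.IsHomogeneous d) :
    reesHom f p = Polynomial.C (eval f p) * Polynomial.X ^ d := by
  rw [reesHom, hp.aeval_mul_const, ← Polynomial.algebraMap_eq,
    aeval_algebraMap_apply_eq_algebraMap_eval]

theorem mem_reesJ_iff_eval_eq_zero {p : MvPolynomial ι R} {d : ℕ} (hp : p.IsHomogeneous d) :
    p ∈ reesJ f ↔ eval f p = 0 := by
  rw [reesJ, RingHom.mem_ker, reesHom_of_isHomogeneous f hp, Polynomial.C_mul_X_pow_eq_monomial,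
    Polynomial.monomial_eq_zero_iff]

theorem coeff_reesHom (p : MvPolynomial ι R) (n : ℕ) :
    (reesHom f p).coeff n = eval f (homogeneousComponent n p) := by
  induction p using MvPolynomial.induction_on' with
  | monomial v c =>
    have hv := isHomogeneous_monomial (σ := ι) c (rfl : v.degree = v.degree)
    rw [reesHom_of_isHomogeneous f hv, Polynomial.coeff_C_mul_X_pow,
      homogeneousComponent_of_mem ((mem_homogeneousSubmodule _ _).mpr hv)]
    split_ifs <;> simp_all
  | add p q hp hq => rw [map_add, Polynomial.coeff_add, hp, hq, map_add, map_add]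

theorem homogeneousComponent_mem_reesJ {p : MvPolynomial ι R} (hp : p ∈ reesJ f) (n : ℕ) :
    homogeneousComponent n p ∈ reesJ f := by
  rw [mem_reesJ_iff_eval_eq_zero f (homogeneousComponent_isHomogeneous n p), ← coeff_reesHom,
    RingHom.mem_ker.mp hp, Polynomial.coeff_zero]

theorem C_pow_mul_mem_linRel_of_isHomogeneous (i : ι) {p : MvPolynomial ι R} {d : ℕ}
    (hp : p.IsHomogeneous d) (hJ : p ∈ reesJ f) : C (f i ^ d) * p ∈ linRel f := by
  have h := aeval_sub_aeval_mem (R := R) (g := fun j => X j * C (f i))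
    (g' := fun j => C (f j) * X i)
    (fun j => by simpa [mul_comm] using C_mul_X_sub_C_mul_X_mem_linRel f i j) p
  rwa [hp.aeval_mul_const, hp.aeval_mul_const, aeval_X_left_apply, ← algebraMap_eq,
    aeval_algebraMap_apply_eq_algebraMap_eval, (mem_reesJ_iff_eval_eq_zero f hp).mp hJ, map_zero,
    zero_mul, sub_zero, algebraMap_eq, mul_comm, ← map_pow] at h

theorem C_pow_mul_mem_linRel_of_mem_reesJ (i : ι) {p : MvPolynomial ι R} (hp : p ∈ reesJ f)
    {D : ℕ} (hD : p.totalDegree ≤ D) : C (f i ^ D) * p ∈ linRel f := by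
  rw [← sum_homogeneousComponent p, Finset.mul_sum]
  refine Ideal.sum_mem _ fun d hd => ?_
  have hdD : d ≤ D := (Nat.lt_succ_iff.mp (Finset.mem_range.mp hd)).trans hD
  rw [← pow_sub_mul_pow _ hdD, map_mul, mul_assoc]
  exact Ideal.mul_mem_left _ _ (C_pow_mul_mem_linRel_of_isHomogeneous f i
    (homogeneousComponent_isHomogeneous d p) (homogeneousComponent_mem_reesJ f hp d))

theorem mem_conductorIdeal_iff_le_colon {r : R} :
    r ∈ conductorIdeal f ↔ reesJ f ≤ (linRel f).colon {C r} := by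
  simp [conductorIdeal, Submodule.mem_colon, SetLike.le_def, smul_eq_C_mul, mul_comm]

theorem exists_pow_mem_conductorIdeal [Finite ι] [IsNoetherianRing R] (i : ι) :
    ∃ D, f i ^ D ∈ conductorIdeal f := by
  obtain ⟨s, hs⟩ := IsNoetherian.noetherian (reesJ f)
  refine ⟨s.sup totalDegree, (mem_conductorIdeal_iff_le_colon f).mpr ?_⟩
  rw [← hs, Ideal.span_le]
  intro p hp
  rw [SetLike.mem_coe, Submodule.mem_colon_singleton, smul_eq_mul, mul_comm]
  exact C_pow_mul_mem_linRel_of_mem_reesJ f i (hs ▸ Ideal.subset_span hp) (Finset.le_sup hp)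

theorem conductorIdeal_ne_bot [NoZeroDivisors R] [Finite ι] [IsNoetherianRing R]
    (hf : Ideal.span (Set.range f) ≠ ⊥) : conductorIdeal f ≠ ⊥ := by
  obtain ⟨i, hi⟩ : ∃ i, f i ≠ 0 := by
    by_contra! h
    exact hf (Ideal.span_eq_bot.mpr (Set.forall_mem_range.mpr h))
  obtain ⟨D, hD⟩ := exists_pow_mem_conductorIdeal f i
  exact fun h => pow_ne_zero D hi (Ideal.mem_bot.mp (h ▸ hD))

theorem C_mem_reesJ_iff {r : R} : (C r : MvPolynomial ι R) ∈ reesJ f ↔ r = 0 := by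
  rw [mem_reesJ_iff_eval_eq_zero f (isHomogeneous_C ι r), eval_C]

theorem colon_span_C_eq_reesJ [IsDomain R] {r : R} (hr : r ∈ conductorIdeal f) (hr0 : r ≠ 0) :
    (linRel f).colon (Ideal.span {(C r : MvPolynomial ι R)}) = reesJ f := by
  rw [Ideal.colon_span]
  refine le_antisymm (fun p hp => ?_) ((mem_conductorIdeal_iff_le_colon f).mp hr)
  have hpr : p * C r ∈ reesJ f := linRel_le_reesJ f (Submodule.mem_colon_singleton.mp hp)
  exact ((RingHom.ker_isPrime _).mem_or_mem hpr).resolve_right ((C_mem_reesJ_iff f).not.mpr hr0)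

end Rees

/-- For a domain `R` and a non-zero ideal `I = (f₁,…,f_m)`:
(a) `C(I) ≠ 0`; (b) for every non-zero `r ∈ C(I)` one has `L :_T r = J`. -/
theorem stmt_1 {R : Type} [CommRing R] [IsDomain R] [IsNoetherianRing R] {m : ℕ}
    (f : Fin m → R) (I : Ideal R) (hI : I = Ideal.span (Set.range f)) (hne : I ≠ ⊥) :
    conductorIdeal f ≠ ⊥ ∧
      ∀ r ∈ conductorIdeal f, r ≠ 0 →
        Submodule.colon (linRel f)
            (Ideal.span {(MvPolynomial.C r : MvPolynomial (Fin m) R)}) = reesJ f := by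
  subst hI
  exact ⟨conductorIdeal_ne_bot f hne, fun r hr hr0 => colon_span_C_eq_reesJ f hr hr0⟩
end

section
/- Let I ⊂ R be an ideal in a Noetherian ring R. Then √I ⊆ √C(I), i.e. the radical of I is contained in the radical of the conductor of I. -/
/-!
Fix a generator `fᵢ`. Modulo the Koszul relations `fᵢ yⱼ - fⱼ yᵢ ∈ L`, multiplying a form
`g` of degree `n` by `fᵢⁿ` turns every monomial `c yᵈ` into `c fᵈ yᵢⁿ`, so
`fᵢⁿ g ≡ g(f) yᵢⁿ (mod L)`. For `g ∈ J` every homogeneous component satisfies `g_n(f) = 0`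
(it is the `tⁿ`-coefficient of `φ g`), hence `fᵢⁿ g_n ∈ L`. As `J` is finitely generated,
one power `fᵢᴺ` works for all of `J`, so `fᵢ ∈ √C(I)` for every generator.
-/

namespace ReesAlgebra

open MvPolynomial

variable {R : Type u} [CommRing R] {ι : Type v} (f : ι → R)

lemma C_mul_X_sub_C_mul_X_mem_linRel (i j : ι) :
    (C (f i) * X j - C (f j) * X i : MvPolynomial ι R) ∈ linRel f := by
  refine Ideal.subset_span ⟨Finsupp.single j (f i) - Finsupp.single i (f j), ?_, ?_⟩
  · rw [Finsupp.sum_sub_index (fun k r s => sub_mul r s (f k)),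
      Finsupp.sum_single_index (zero_mul _), Finsupp.sum_single_index (zero_mul _)]
    ring
  · rw [Finsupp.sum_sub_index (fun k r s => by rw [map_sub, sub_mul]),
      Finsupp.sum_single_index (by simp), Finsupp.sum_single_index (by simp)]

lemma mk_C_pow_degree_mul_monomial (i : ι) (d : ι →₀ ℕ) (c : R) :
    Ideal.Quotient.mk (linRel f) (C (f i) ^ d.degree * monomial d c) =
      Ideal.Quotient.mk (linRel f) (C (c * d.prod fun j k => f j ^ k) * X i ^ d.degree) := by
  have hswap : ∀ j, Ideal.Quotient.mk (linRel f) (C (f i) * X j) =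
      Ideal.Quotient.mk (linRel f) (C (f j) * X i) :=
    fun j => Ideal.Quotient.eq.mpr (C_mul_X_sub_C_mul_X_mem_linRel f i j)
  have hlhs : (C (f i) ^ d.degree * monomial d c : MvPolynomial ι R) =
      C c * ∏ j ∈ d.support, (C (f i) * X j) ^ d j := by
    simp only [monomial_eq, Finsupp.prod, mul_pow, Finset.prod_mul_distrib, Finsupp.degree_apply,
      Finset.prod_pow_eq_pow_sum]
    ring
  have hrhs : (C (c * d.prod fun j k => f j ^ k) * X i ^ d.degree : MvPolynomial ι R) =
      C c * ∏ j ∈ d.support, (C (f j) * X i) ^ d j := by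
    simp only [Finsupp.prod, map_mul, map_prod, map_pow, mul_pow, Finset.prod_mul_distrib,
      Finsupp.degree_apply, Finset.prod_pow_eq_pow_sum]
    ring
  rw [hlhs, hrhs, map_mul, map_mul, map_prod, map_prod]
  simp only [map_pow, hswap]

lemma reesHom_monomial (d : ι →₀ ℕ) (c : R) :
    reesHom f (monomial d c) =
      Polynomial.C (c * d.prod fun j k => f j ^ k) * Polynomial.X ^ d.degree := by
  simp only [reesHom, aeval_monomial, Polynomial.algebraMap_eq, Finsupp.prod, mul_pow,
    Finset.prod_mul_distrib, Finsupp.degree_apply, Finset.prod_pow_eq_pow_sum, ← Polynomial.C_pow,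
    map_mul, map_prod]
  ring

lemma coeff_reesHom (p : MvPolynomial ι R) (n : ℕ) :
    (reesHom f p).coeff n = eval f (homogeneousComponent n p) := by
  induction p using MvPolynomial.induction_on' with
  | monomial d c =>
    rw [reesHom_monomial, homogeneousComponent_of_mem (isHomogeneous_monomial c rfl),
      Polynomial.coeff_C_mul_X_pow, Finsupp.degree_eq_weight_one]
    split_ifs
    · simp [eval_monomial]
    · simp
  | add p q hp hq => simp only [map_add, Polynomial.coeff_add, hp, hq]

lemma eval_homogeneousComponent_eq_zero {g : MvPolynomial ι R} (hg : g ∈ reesJ f) (n : ℕ) :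
    eval f (homogeneousComponent n g) = 0 := by
  rw [← coeff_reesHom, RingHom.mem_ker.mp hg, Polynomial.coeff_zero]

lemma C_pow_mul_homogeneousComponent_mem_linRel (i : ι) (n : ℕ) {g : MvPolynomial ι R}
    (hg : g ∈ reesJ f) : C (f i) ^ n * homogeneousComponent n g ∈ linRel f := by
  set p := homogeneousComponent n g
  have hp : p.IsHomogeneous n := homogeneousComponent_isHomogeneous n g
  have hmonomial : ∀ d ∈ p.support,
      Ideal.Quotient.mk (linRel f) (C (f i) ^ n * monomial d (coeff d p)) =
        Ideal.Quotient.mk (linRel f) (C (coeff d p * d.prod fun j k => f j ^ k) * X i ^ n) := by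
    intro d hd
    have hdeg : d.degree = n := by
      rw [Finsupp.degree_eq_weight_one]
      exact hp (mem_support_iff.mp hd)
    rw [← hdeg, mk_C_pow_degree_mul_monomial]
  have heval : ∑ d ∈ p.support, (C (coeff d p * d.prod fun j k => f j ^ k) * X i ^ n) =
      C (eval f p) * X i ^ n := by
    rw [eval_eq, map_sum, Finset.sum_mul]
    rfl
  rw [← Ideal.Quotient.eq_zero_iff_mem, ← support_sum_monomial_coeff p, Finset.mul_sum, map_sum,
    Finset.sum_congr rfl hmonomial, ← map_sum, heval, eval_homogeneousComponent_eq_zero f hg,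
    map_zero, zero_mul, map_zero]

lemma C_pow_mul_mem_linRel_of_totalDegree_le (i : ι) {N : ℕ} {g : MvPolynomial ι R}
    (hg : g ∈ reesJ f) (hN : g.totalDegree ≤ N) : C (f i) ^ N * g ∈ linRel f := by
  rw [← sum_homogeneousComponent g, Finset.mul_sum]
  refine Ideal.sum_mem _ fun n hn => ?_
  have hnN : n ≤ N := (Nat.lt_succ_iff.mp (Finset.mem_range.mp hn)).trans hN
  rw [← Nat.sub_add_cancel hnN, pow_add, mul_assoc]
  exact Ideal.mul_mem_left _ _ (C_pow_mul_homogeneousComponent_mem_linRel f i n hg)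

lemma mem_conductorIdeal_iff {r : R} :
    r ∈ conductorIdeal f ↔ ∀ p ∈ reesJ f, C r * p ∈ linRel f := by
  simp only [conductorIdeal, Submodule.mem_colon, Submodule.restrictScalars_mem, smul_eq_C_mul]
  rfl

lemma exists_pow_mem_conductorIdeal [Finite ι] [IsNoetherianRing R] (i : ι) :
    ∃ N : ℕ, f i ^ N ∈ conductorIdeal f := by
  obtain ⟨s, hs⟩ : (reesJ f).FG := IsNoetherian.noetherian _
  refine ⟨s.sup totalDegree, (mem_conductorIdeal_iff f).mpr fun p hp => ?_⟩
  rw [← hs] at hp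
  induction hp using Submodule.span_induction with
  | mem g hg =>
    rw [map_pow]
    exact C_pow_mul_mem_linRel_of_totalDegree_le f i (hs ▸ Ideal.subset_span hg)
      (Finset.le_sup hg)
  | zero => simp
  | add p q _ _ hp hq => simpa [mul_add] using Ideal.add_mem _ hp hq
  | smul a p _ hp => simpa [mul_left_comm] using Ideal.mul_mem_left _ a hp

theorem span_range_le_radical_conductorIdeal [Finite ι] [IsNoetherianRing R] :
    Ideal.span (Set.range f) ≤ (conductorIdeal f).radical := by
  rw [Ideal.span_le]
  rintro _ ⟨i, rfl⟩
  exact exists_pow_mem_conductorIdeal f i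

end ReesAlgebra

/-- `√I ⊆ √C(I)` for any ideal `I = (f₁,…,f_m)` of a Noetherian ring. -/
theorem stmt_3 {R : Type} [CommRing R] [IsNoetherianRing R] {m : ℕ}
    (f : Fin m → R) (I : Ideal R) (hI : I = Ideal.span (Set.range f)) :
    I.radical ≤ (conductorIdeal f).radical := by
  rw [hI, Ideal.radical_le_radical_iff]
  exact ReesAlgebra.span_range_le_radical_conductorIdeal f
end

section
/- If R is a polynomial ring over a field and I is a monomial ideal of R, then the conductor C(I) is a monomial ideal; and if R is a graded ring and I is a graded ideal of R, then C(I) is a graded ideal. -/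
/-!
Grade `T = R[y_1, …, y_m]` by giving `y_i` the degree of `f_i`, and `R[t]` by giving `t` degree `0`;
each grading is encoded by the coaction `x ↦ ∑_g x_g t^g` into a monoid algebra over the grading
monoid. The Rees map `T → R[t]` commutes with the coactions, so `J` is graded, and the degree-`g`
part of a linear relation `∑ a_i y_i` is again a linear relation, so `L` is graded. If `r J ⊆ L` and
`q ∈ J` is homogeneous of degree `g'`, then `r_g q` is the degree-`(g + g')` part of `r q ∈ L`; as
every element of `J` is the sum of its homogeneous components, `r_g ∈ C(I)`. Monomial ideals are the homogeneous ideals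
for the fine `ℕⁿ`-grading, to which this applies.
-/

open AddMonoidAlgebra DirectSum

theorem AddMonoidAlgebra.coeff_mul_mem {A M : Type*} [Semiring A] [Add M]
    (H : M → AddSubmonoid A) (hH : ∀ {a b : M} {x y : A}, x ∈ H a → y ∈ H b → x * y ∈ H (a + b))
    {x y : AddMonoidAlgebra A M} (hx : ∀ a, x.coeff a ∈ H a) (hy : ∀ b, y.coeff b ∈ H b)
    (g : M) : (x * y).coeff g ∈ H g := by
  classical
  rw [coeff_mul]
  refine sum_mem fun a _ => sum_mem fun b _ => ?_
  dsimp only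
  split_ifs with h
  · exact h ▸ hH (hx a) (hy b)
  · exact zero_mem _

theorem AddMonoidAlgebra.coeff_mem_of_mem_span {A M : Type*} [CommRing A] [AddMonoid M]
    (ψ : A →+* AddMonoidAlgebra A M) {s : Set A} {I : Ideal A}
    (hs : ∀ x ∈ s, ∀ g, (ψ x).coeff g ∈ I) {p : A} (hp : p ∈ Ideal.span s) (g : M) :
    (ψ p).coeff g ∈ I := by
  have hspan : Ideal.span s ≤ RingHom.ker ((mapRingHom M (Ideal.Quotient.mk I)).comp ψ) :=
    Ideal.span_le.2 fun x hx => by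
      ext g
      simpa [Ideal.Quotient.eq_zero_iff_mem] using hs x hx g
  simpa [Ideal.Quotient.eq_zero_iff_mem] using congr($(hspan hp).coeff g)

namespace GradedRing

variable {R M σ : Type*} [CommRing R] [AddCommMonoid M] [DecidableEq M]
  [SetLike σ R] [AddSubmonoidClass σ R] (𝒜 : M → σ) [GradedRing 𝒜]

/-- `r ↦ ∑ g, r_g t^g` -/
noncomputable def coaction : R →+* AddMonoidAlgebra R M :=
  (toSemiring (fun g => (singleAddHom g).comp (AddSubmonoidClass.subtype (𝒜 g)))
    (by simp [AddMonoidAlgebra.one_def])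
    (fun {i j} ai aj => by simp [single_mul_single])).comp
  (decomposeRingEquiv 𝒜 : R →+* ⨁ g, 𝒜 g)

theorem coaction_of_mem {g : M} {x : R} (hx : x ∈ 𝒜 g) : coaction 𝒜 x = single g x := by
  simp [coaction, decomposeRingEquiv, decompose_of_mem 𝒜 hx]

theorem coeff_coaction (x : R) (g : M) : (coaction 𝒜 x).coeff g = decompose 𝒜 x g := by
  induction x using DirectSum.Decomposition.inductionOn 𝒜 with
  | zero => simp
  | @homogeneous h y =>
    obtain ⟨y, hy⟩ := y
    rw [coaction_of_mem 𝒜 hy]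
    by_cases h : h = g
    · subst h; simp [decompose_of_mem_same 𝒜 hy]
    · simp [decompose_of_mem_ne 𝒜 hy h, h]
  | add x y hx hy => simp [hx, hy]

variable {ι : Type*} (d : ι → M)

open MvPolynomial in
noncomputable def mvCoaction : MvPolynomial ι R →+* AddMonoidAlgebra (MvPolynomial ι R) M :=
  eval₂Hom ((mapRingHom M C).comp (coaction 𝒜)) fun i => single (d i) (X i)

@[simp]
theorem mvCoaction_C (r : R) :
    mvCoaction 𝒜 d (MvPolynomial.C r) = mapRingHom M MvPolynomial.C (coaction 𝒜 r) :=
  MvPolynomial.eval₂Hom_C _ _ r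

@[simp]
theorem mvCoaction_X (i : ι) :
    mvCoaction 𝒜 d (MvPolynomial.X i) = single (d i) (MvPolynomial.X i) :=
  MvPolynomial.eval₂Hom_X' _ _ i

theorem sum_coeff_mvCoaction (p : MvPolynomial ι R) :
    ((mvCoaction 𝒜 d p).coeff.sum fun _ c => c) = p := by
  let ε := (lift (MvPolynomial ι R) (MvPolynomial ι R) M 1).toRingHom
  have hε (q : AddMonoidAlgebra (MvPolynomial ι R) M) : ε q = q.coeff.sum fun _ c => c := by
    simp [ε, lift_apply]
  suffices ε.comp (mvCoaction 𝒜 d) = RingHom.id _ by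
    rw [← hε]; exact RingHom.congr_fun this p
  refine MvPolynomial.ringHom_ext (fun r => ?_) fun i => by simp [ε]
  induction r using DirectSum.Decomposition.inductionOn 𝒜 with
  | zero => simp
  | @homogeneous h y =>
    obtain ⟨y, hy⟩ := y
    simp [coaction_of_mem 𝒜 hy, ε]
  | add x y hx hy => simp only [RingHom.comp_apply, map_add] at hx hy ⊢; rw [hx, hy]

noncomputable def mvGrade (g : M) : AddSubgroup (MvPolynomial ι R) :=
  ((mvCoaction 𝒜 d).toAddMonoidHom - (singleAddHom g : MvPolynomial ι R →+ _)).ker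

theorem mem_mvGrade {g : M} {q : MvPolynomial ι R} :
    q ∈ mvGrade 𝒜 d g ↔ mvCoaction 𝒜 d q = single g q := by
  simp [mvGrade, sub_eq_zero]

theorem mul_mem_mvGrade {a b : M} {x y : MvPolynomial ι R} (hx : x ∈ mvGrade 𝒜 d a)
    (hy : y ∈ mvGrade 𝒜 d b) : x * y ∈ mvGrade 𝒜 d (a + b) := by
  rw [mem_mvGrade] at *
  rw [map_mul, hx, hy, single_mul_single]

theorem coeff_mvCoaction_mem_mvGrade (p : MvPolynomial ι R) (g : M) :
    (mvCoaction 𝒜 d p).coeff g ∈ mvGrade 𝒜 d g := by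
  induction p using MvPolynomial.induction_on generalizing g with
  | C r =>
    rw [mem_mvGrade, mvCoaction_C, coeff_mapRingHom, coeff_coaction, mvCoaction_C,
      coaction_of_mem 𝒜 (SetLike.coe_mem _), mapRingHom_single]
  | add p q hp hq =>
    rw [map_add, coeff_add, Finsupp.add_apply]
    exact add_mem (hp g) (hq g)
  | mul_X p i hp =>
    have hX (b : M) : (single (d i) (MvPolynomial.X i)).coeff b ∈ mvGrade 𝒜 d b := by
      rw [coeff_single, Finsupp.single_apply]
      split_ifs with h
      · exact h ▸ (mem_mvGrade 𝒜 d).2 (mvCoaction_X 𝒜 d i)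
      · exact zero_mem _
    rw [map_mul, mvCoaction_X]
    exact coeff_mul_mem (fun g => (mvGrade 𝒜 d g).toAddSubmonoid) (mul_mem_mvGrade 𝒜 d) hp hX g

theorem coeff_coaction_mul_of_mem {e : M} {y : R} (hy : y ∈ 𝒜 e) (r : R) (g : M) :
    (coaction 𝒜 (r * y)).coeff g = (coaction 𝒜 r * single e 1).coeff g * y := by
  rw [← coeff_mul_single_zero, mul_assoc, single_mul_single, add_zero, one_mul, map_mul,
    coaction_of_mem 𝒜 hy]

theorem coeff_mvCoaction_C_mul_X (r : R) (i : ι) (g : M) :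
    (mvCoaction 𝒜 d (MvPolynomial.C r * MvPolynomial.X i)).coeff g =
      MvPolynomial.C ((coaction 𝒜 r * single (d i) 1).coeff g) * MvPolynomial.X i := by
  rw [← coeff_mapRingHom, ← coeff_mul_single_zero, map_mul, map_mul, mvCoaction_C, mvCoaction_X,
    mapRingHom_single, map_one, mul_assoc, single_mul_single, add_zero, one_mul]

variable (f : ι → R)

noncomputable def polynomialCoaction : Polynomial R →+* AddMonoidAlgebra (Polynomial R) M :=
  Polynomial.eval₂RingHom ((mapRingHom M Polynomial.C).comp (coaction 𝒜)) (single 0 Polynomial.X)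

theorem mapRingHom_reesHom_comp_mvCoaction (hf : ∀ i, f i ∈ 𝒜 (d i)) :
    (mapRingHom M (reesHom f : MvPolynomial ι R →+* Polynomial R)).comp (mvCoaction 𝒜 d) =
      (polynomialCoaction 𝒜).comp (reesHom f) := by
  refine MvPolynomial.ringHom_ext (fun r => ?_) fun i => ?_
  · have hC : (reesHom f : MvPolynomial ι R →+* Polynomial R).comp MvPolynomial.C = Polynomial.C :=
      (reesHom f).comp_algebraMap
    rw [RingHom.comp_apply, mvCoaction_C, ← RingHom.comp_apply, ← mapRingHom_comp, hC]
    simp [polynomialCoaction]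
  · simp [reesHom, polynomialCoaction, coaction_of_mem 𝒜 (hf i), single_mul_single]

theorem coeff_mvCoaction_mem_reesJ (hf : ∀ i, f i ∈ 𝒜 (d i)) {p : MvPolynomial ι R}
    (hp : p ∈ reesJ f) (g : M) : (mvCoaction 𝒜 d p).coeff g ∈ reesJ f := by
  have := congr((($(mapRingHom_reesHom_comp_mvCoaction 𝒜 d f hf) p).coeff g))
  rw [reesJ, RingHom.mem_ker] at hp ⊢
  simpa [hp] using this

theorem coeff_mvCoaction_mem_linRel (hf : ∀ i, f i ∈ 𝒜 (d i)) {p : MvPolynomial ι R}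
    (hp : p ∈ linRel f) (g : M) : (mvCoaction 𝒜 d p).coeff g ∈ linRel f := by
  refine coeff_mem_of_mem_span _ ?_ hp g
  rintro _ ⟨a, ha, rfl⟩ g
  -- `c i r` is the degree-`(g - d i)` component of `r`, written without subtraction in `M`
  let c (i : ι) (r : R) : R := (coaction 𝒜 r * single (d i) 1).coeff g
  refine Ideal.subset_span ⟨a.sum fun i r => Finsupp.single i (c i r), ?_, ?_⟩
  · rw [Finsupp.sum_sum_index (fun _ => zero_mul _) fun _ _ _ => add_mul _ _ _]
    calc (a.sum fun i r => (Finsupp.single i (c i r)).sum fun i r => r * f i)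
        = a.sum fun i r => (coaction 𝒜 (r * f i)).coeff g :=
          Finsupp.sum_congr fun i _ => by
            rw [Finsupp.sum_single_index (zero_mul _), coeff_coaction_mul_of_mem 𝒜 (hf i)]
      _ = (coaction 𝒜 (a.sum fun i r => r * f i)).coeff g := by
          rw [map_finsuppSum, coeff_finsuppSum, Finsupp.sum_apply]
      _ = 0 := by simp [ha]
  · rw [Finsupp.sum_sum_index (by simp) fun _ _ _ => by rw [map_add, add_mul], map_finsuppSum,
      coeff_finsuppSum, Finsupp.sum_apply]
    exact Finsupp.sum_congr fun i _ => by
      rw [Finsupp.sum_single_index (by simp), coeff_mvCoaction_C_mul_X]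

theorem mem_conductorIdeal_iff {r : R} :
    r ∈ conductorIdeal f ↔ ∀ p ∈ reesJ f, MvPolynomial.C r * p ∈ linRel f := by
  simp [conductorIdeal, Submodule.mem_colon, MvPolynomial.smul_eq_C_mul]

end GradedRing

open GradedRing in
theorem conductorIdeal_isHomogeneous {R M σ ι : Type*} [CommRing R] [AddCommMonoid M]
    [IsRightCancelAdd M] [DecidableEq M] [SetLike σ R] [AddSubmonoidClass σ R] (𝒜 : M → σ)
    [GradedRing 𝒜] {f : ι → R} (hf : ∀ i, SetLike.IsHomogeneousElem 𝒜 (f i)) :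
    (conductorIdeal f).IsHomogeneous 𝒜 := by
  choose d hd using hf
  intro g r hr
  rw [mem_conductorIdeal_iff] at hr ⊢
  intro p hp
  rw [← sum_coeff_mvCoaction 𝒜 d p, Finsupp.sum, Finset.mul_sum]
  refine sum_mem fun g' _ => ?_
  set q := (mvCoaction 𝒜 d p).coeff g'
  have hq : mvCoaction 𝒜 d q = single g' q :=
    (mem_mvGrade 𝒜 d).1 (coeff_mvCoaction_mem_mvGrade 𝒜 d p g')
  have := coeff_mvCoaction_mem_linRel 𝒜 d f hd (hr q (coeff_mvCoaction_mem_reesJ 𝒜 d f hd hp g'))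
    (g + g')
  rwa [map_mul, hq, mvCoaction_C, coeff_mul_single_eq_coeff_mul g fun _ _ => add_left_inj g',
    coeff_mapRingHom, coeff_coaction] at this

theorem Finsupp.weight_single_one {σ : Type*} (s : σ →₀ ℕ) :
    Finsupp.weight (fun i : σ => Finsupp.single i 1) s = s := by
  simp [Finsupp.weight_apply]

namespace MvPolynomial

attribute [local instance] weightedGradedAlgebra

theorem weightedHomogeneousComponent_single_one {K σ : Type*} [CommSemiring K] (s : σ →₀ ℕ)
    (p : MvPolynomial σ K) :
    weightedHomogeneousComponent (fun i => Finsupp.single i 1) s p = monomial s (coeff s p) := by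
  classical
  ext t
  rw [coeff_weightedHomogeneousComponent, Finsupp.weight_single_one, coeff_monomial]
  split_ifs <;> simp_all

theorem exists_eq_span_monomial_of_isHomogeneous {K σ : Type*} [Field K] [DecidableEq σ]
    {I : Ideal (MvPolynomial σ K)}
    (hI : I.IsHomogeneous (weightedHomogeneousSubmodule K fun i : σ => Finsupp.single i 1)) :
    ∃ S : Set (σ →₀ ℕ), I = Ideal.span ((fun s => monomial s (1 : K)) '' S) := by
  refine ⟨{s | monomial s 1 ∈ I}, le_antisymm (fun p hp => ?_) (Ideal.span_le.2 ?_)⟩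
  · rw [p.as_sum]
    refine sum_mem fun s hs => ?_
    have hmem : monomial s (coeff s p) ∈ I := weightedHomogeneousComponent_single_one s p ▸
      weightedHomogeneousComponent_mem_of_mem K _ hI hp s
    rw [← mul_one (coeff s p), ← C_mul_monomial]
    refine Ideal.mul_mem_left _ _ (Ideal.subset_span ⟨s, ?_, rfl⟩)
    simpa [C_mul_monomial, inv_mul_cancel₀ (mem_support_iff.1 hs)] using
      I.mul_mem_left (C (coeff s p)⁻¹) hmem
  · rintro _ ⟨s, hs, rfl⟩
    exact hs

end MvPolynomial

/-- (i) If `R` is a polynomial ring over a field and `I` is a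
monomial ideal (with monomial generators `f`), then `C(I)` is a monomial ideal.
(ii) If `R` is a graded ring and `I` is a graded ideal (with homogeneous
generators `f`), then `C(I)` is a graded ideal. -/
theorem stmt_8 :
    (∀ (K : Type) [Field K] (n : ℕ) {m : ℕ}
      (f : Fin m → MvPolynomial (Fin n) K),
      (∀ j, ∃ s : Fin n →₀ ℕ, f j = MvPolynomial.monomial s 1) →
      ∀ I : Ideal (MvPolynomial (Fin n) K), I = Ideal.span (Set.range f) →
        ∃ S : Set (Fin n →₀ ℕ),
          conductorIdeal f =
            Ideal.span ((fun s => (MvPolynomial.monomial s (1 : K))) '' S)) ∧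
    (∀ (R : Type) [CommRing R] (𝒜 : ℕ → Submodule ℤ R) [GradedRing 𝒜] {m : ℕ}
      (f : Fin m → R), (∀ j, SetLike.IsHomogeneousElem 𝒜 (f j)) →
      ∀ I : Ideal R, I = Ideal.span (Set.range f) → I.IsHomogeneous 𝒜 →
        (conductorIdeal f).IsHomogeneous 𝒜) := by
  refine ⟨fun K _ n m f hf _ _ => ?_, fun R _ 𝒜 _ m f hf _ _ _ => conductorIdeal_isHomogeneous 𝒜 hf⟩
  let := MvPolynomial.weightedGradedAlgebra K fun i : Fin n => Finsupp.single i 1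
  refine MvPolynomial.exists_eq_span_monomial_of_isHomogeneous
    (conductorIdeal_isHomogeneous _ fun j => ?_)
  obtain ⟨s, hs⟩ := hf j
  exact ⟨s, hs ▸ MvPolynomial.isWeightedHomogeneous_monomial _ _ _ (Finsupp.weight_single_one s)⟩
end

section
/- Let R be a Noetherian ring, I = (f_1, …, f_m) an ideal of R, and f ∈ R a non-zerodivisor. Set I' = fI, generated by ff_1, …, ff_m. Let J be the defining ideal of R(I) with respect to the generators f_1, …, f_m and J' the defining ideal of R(I') with respect to the generators ff_1, …, ff_m, both as ideals of T = R[y_1, …, y_m]. Then J = J'. -/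
/-- If `c` is a non-zerodivisor, the defining ideal of the Rees
algebra of `I = (f₁,…,f_m)` (w.r.t. `f₁,…,f_m`) equals that of `I' = cI`
(w.r.t. `cf₁,…,cf_m`). -/
theorem stmt_14 {R : Type} [CommRing R] [IsNoetherianRing R] {m : ℕ}
    (f : Fin m → R) (c : R) (hc : c ∈ nonZeroDivisors R) :
    reesJ f = reesJ (fun j => c * f j) := by
  have hcoeff : ∀ (p : Polynomial R) (n : ℕ),
      (Polynomial.aeval (Polynomial.C c * Polynomial.X) p).coeff n = c ^ n * p.coeff n := by
    intro p
    induction p using Polynomial.induction_on' with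
    | add p q hp hq =>
        intro n; simp [hp, hq, mul_add]
    | monomial k a =>
        intro n
        have : (Polynomial.aeval (Polynomial.C c * Polynomial.X) (Polynomial.monomial k a))
            = Polynomial.monomial k (a * c ^ k) := by
          rw [Polynomial.aeval_monomial, mul_pow, ← Polynomial.C_pow,
            ← Polynomial.C_mul_X_pow_eq_monomial]
          simp only [Polynomial.algebraMap_apply, Algebra.algebraMap_self, RingHom.id_apply]
          rw [← mul_assoc, ← Polynomial.C_mul]
        rw [this, Polynomial.coeff_monomial, Polynomial.coeff_monomial]
        split_ifs with h
        · subst h; ring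
        · ring
  have hinj : Function.Injective (Polynomial.aeval (Polynomial.C c * Polynomial.X) :
      Polynomial R →ₐ[R] Polynomial R) := by
    intro p q hpq
    ext n
    have := congrArg (fun r => Polynomial.coeff r n) hpq
    simp only [hcoeff] at this
    exact (mul_cancel_left_mem_nonZeroDivisors (pow_mem hc n)).mp this
  have hcomp : reesHom (fun j => c * f j) =
      (Polynomial.aeval (Polynomial.C c * Polynomial.X)).comp (reesHom f) := by
    apply MvPolynomial.algHom_ext
    intro i
    simp [reesHom]
    ring
  ext p
  simp only [reesJ, RingHom.mem_ker, hcomp, AlgHom.comp_apply, AlgHom.coe_comp,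
    Function.comp_apply]
  constructor
  · intro h; rw [h]; simp
  · intro h
    have : (Polynomial.aeval (Polynomial.C c * Polynomial.X) :
          Polynomial R →ₐ[R] Polynomial R) (reesHom f p) =
        (Polynomial.aeval (Polynomial.C c * Polynomial.X) :
          Polynomial R →ₐ[R] Polynomial R) 0 := by simpa using h
    exact hinj this
end

section
/- Let n ≥ 2 and let c, d be nonnegative integers with (n−1)c < d ≤ nc. Then I_{n,d,c} = (x_1⋯x_n)^{d−(n−1)c} · I_{n,(nc−d)(n−1), nc−d}, the product of the principal ideal generated by (x_1⋯x_n)^{d−(n−1)c} with the bounded Veronese ideal I_{n,(nc−d)(n−1), nc−d}. -/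
/-- The bounded Veronese ideal `I_{n,d,c} ⊆ K[x₁,…,x_n]`, generated by the monomials
`x₁^{α₁} ⋯ x_n^{α_n}` with `α₁ + ⋯ + α_n = d` and `αᵢ ≤ c` for all `i`. -/
noncomputable def boundedVeronese (K : Type) [Field K] (n d c : ℕ) :
    Ideal (MvPolynomial (Fin n) K) :=
  Ideal.span {p | ∃ α : Fin n → ℕ, (∑ i, α i) = d ∧ (∀ i, α i ≤ c) ∧
    p = ∏ i, MvPolynomial.X i ^ α i}

/-- The index set of the canonical (monomial) generators of `I_{n,d,c}`. -/
def veroneseIndex (n d c : ℕ) : Type :=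
  {α : Fin n → ℕ // (∑ i, α i) = d ∧ ∀ i, α i ≤ c}

/-- The canonical monomial generating family of `I_{n,d,c}`. -/
noncomputable def veroneseGens (K : Type) [Field K] (n d c : ℕ) :
    veroneseIndex n d c → MvPolynomial (Fin n) K :=
  fun α => ∏ i, MvPolynomial.X i ^ α.val i

/-- For `n ≥ 2` and `(n−1)c < d ≤ nc`,
`I_{n,d,c} = (x₁⋯x_n)^{d−(n−1)c} · I_{n,(nc−d)(n−1),nc−d}`. -/
theorem stmt_15 (K : Type) [Field K] (n d c : ℕ) (hn : 2 ≤ n)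
    (h1 : (n - 1) * c < d) (h2 : d ≤ n * c) :
    boundedVeronese K n d c =
      Ideal.span {(∏ i, MvPolynomial.X i : MvPolynomial (Fin n) K) ^ (d - (n - 1) * c)} *
        boundedVeronese K n ((n * c - d) * (n - 1)) (n * c - d) := by
  obtain ⟨a, rfl⟩ : ∃ a, n = a + 1 := ⟨n - 1, by omega⟩
  simp only [Nat.add_sub_cancel] at h1 ⊢
  have hac : (a + 1) * c = a * c + c := by ring
  rw [hac] at h2
  have h1' : a * c ≤ d := le_of_lt h1
  have key : (a * c + c - d) * a + (a + 1) * (d - a * c) = d := by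
    zify [h1', h2]; ring
  have hprod : ∀ β : Fin (a + 1) → ℕ,
      (∏ i, (MvPolynomial.X i : MvPolynomial (Fin (a+1)) K) ^ (β i + (d - a * c))) =
        (∏ i, (MvPolynomial.X i : MvPolynomial (Fin (a+1)) K)) ^ (d - a * c) *
          ∏ i, MvPolynomial.X i ^ β i := by
    intro β
    rw [← Finset.prod_pow, ← Finset.prod_mul_distrib]
    refine Finset.prod_congr rfl fun i _ => ?_
    rw [← pow_add]
    congr 1
    omega
  unfold boundedVeronese
  rw [Ideal.span_mul_span', hac]
  congr 1
  ext p
  constructor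
  · rintro ⟨α, hsum, hle, rfl⟩
    have hge : ∀ i, d - a * c ≤ α i := by
      intro i
      have h' : α i + ∑ j ∈ Finset.univ.erase i, α j = d := by
        rw [Finset.add_sum_erase _ _ (Finset.mem_univ i)]; exact hsum
      have hb : ∑ j ∈ Finset.univ.erase i, α j ≤ a * c := by
        calc ∑ j ∈ Finset.univ.erase i, α j ≤ (Finset.univ.erase i).card * c :=
              Finset.sum_le_card_nsmul _ _ c fun j _ => hle j
          _ = a * c := by
              rw [Finset.card_erase_of_mem (Finset.mem_univ i), Finset.card_univ]
              simp
      omega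
    refine ⟨(∏ i, MvPolynomial.X i) ^ (d - a * c), rfl,
      ∏ i, MvPolynomial.X i ^ (α i - (d - a * c)),
      ⟨fun i => α i - (d - a * c), ?_, fun i => ?_, rfl⟩, ?_⟩
    · show (∑ i, (α i - (d - a * c))) = (a * c + c - d) * a
      have hs2 : ∑ i, (α i - (d - a * c) + (d - a * c)) = d := by
        rw [← hsum]
        exact Finset.sum_congr rfl fun i _ => by have := hge i; omega
      rw [Finset.sum_add_distrib, Finset.sum_const, Finset.card_univ] at hs2
      simp only [Fintype.card_fin, smul_eq_mul] at hs2
      omega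
    · show α i - (d - a * c) ≤ a * c + c - d
      have := hle i; have := hge i; omega
    · show (∏ i, MvPolynomial.X i) ^ (d - a * c) *
          (∏ i, MvPolynomial.X i ^ (α i - (d - a * c))) = ∏ i, MvPolynomial.X i ^ α i
      rw [← hprod fun i => α i - (d - a * c)]
      exact Finset.prod_congr rfl fun i _ => by congr 1; have := hge i; omega
  · rintro ⟨x, rfl, y, ⟨β, hsum, hle, rfl⟩, rfl⟩
    refine ⟨fun i => β i + (d - a * c), ?_, fun i => ?_, ?_⟩
    · show (∑ i, (β i + (d - a * c))) = d
      rw [Finset.sum_add_distrib, Finset.sum_const, Finset.card_univ, hsum]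
      simp only [Fintype.card_fin, smul_eq_mul]
      omega
    · show β i + (d - a * c) ≤ c
      have := hle i; omega
    · show (fun x1 x2 => x1 * x2) ((∏ i, (MvPolynomial.X i : MvPolynomial (Fin (a+1)) K)) ^ (d - a * c))
          (∏ i, MvPolynomial.X i ^ β i) = ∏ i, MvPolynomial.X i ^ (β i + (d - a * c))
      exact (hprod β).symm
end
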